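/- The result of CookieMerge has pairwise distinct cookie names: for any sequence oldcookies of cookies with pairwise distinct names and any sequence newcookies of cookies, every two distinct cookies in CookieMerge(oldcookies, newcookies) have distinct names. -/

import Mathlib

/-! Both lists entering the merge are injective on names: the old one by hypothesis, the
deduplicated new one because `keepLast` keeps, for each name, only the entry of largest index.
An old and a new cookie with the same name cannot both survive, since the old one survives
exactly when it is httpOnly and the new one exactly when its old rival is not. -/

/-- A cookie `⟨name, ⟨value, secure, session, httpOnly⟩⟩`. -/
structure Cookie where
  name : String
  value : String
  secure : Bool
  session : Bool
  httpOnly : Bool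
deriving DecidableEq

/-- From a list of cookies, keep for each name only the last (rightmost) occurrence,
preserving the order of the kept cookies. -/
def keepLast (l : List Cookie) : List Cookie :=
  ((l.zipIdx.map Prod.swap).filter fun p => decide (∀ q ∈ l.zipIdx.map Prod.swap, q.2.name = p.2.name → q.1 ≤ p.1)).map Prod.snd

/-- The `CookieMerge` algorithm (RFC6265 storage mechanism, simplified): first remove
from `newcookies` all httpOnly cookies and deduplicate by name (keeping the rightmost);
then the result consists of all cookies whose name appears in exactly one of the two
sequences together with, for each name appearing in both, the new cookie if the old
cookie is not httpOnly, and the old cookie otherwise. -/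
def CookieMerge (oldcookies newcookies : List Cookie) : Set Cookie :=
  let new' := keepLast (newcookies.filter fun c => !c.httpOnly)
  {c | (c ∈ oldcookies ∧ ∀ c' ∈ new', c'.name ≠ c.name)
     ∨ (c ∈ new' ∧ ∀ c' ∈ oldcookies, c'.name ≠ c.name)
     ∨ (∃ cold ∈ oldcookies, ∃ cnew ∈ new', cold.name = cnew.name ∧
         ((cold.httpOnly = false ∧ c = cnew) ∨ (cold.httpOnly = true ∧ c = cold)))}

theorem injOn_of_mem_or_mem {α β : Type*} {f : α → β} {p : α → Prop} {A B : List α}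
    (hA : (A.map f).Nodup) (hB : (B.map f).Nodup) :
    Set.InjOn f {c | (c ∈ A ∧ ∀ b ∈ B, f b = f c → p c) ∨ (c ∈ B ∧ ∀ a ∈ A, f a = f c → ¬p a)} := by
  rintro x (⟨hxA, hxp⟩ | ⟨hxB, hxp⟩) y (⟨hyA, hyp⟩ | ⟨hyB, hyp⟩) hxy
  · exact List.inj_on_of_nodup_map hA hxA hyA hxy
  · exact absurd (hxp y hyB hxy.symm) (hyp x hxA hxy)
  · exact absurd (hyp x hxB hxy) (hxp y hyA hxy.symm)
  · exact List.inj_on_of_nodup_map hB hxB hyB hxy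

theorem keepLast_map_name_nodup (l : List Cookie) : ((keepLast l).map Cookie.name).Nodup := by
  set indexed := l.zipIdx.map Prod.swap
  have hindex : (indexed.map Prod.fst).Nodup := by
    simpa [indexed, List.map_map, Function.comp_def] using List.nodup_range' (s := 0) (n := l.length)
  unfold keepLast
  rw [List.map_map]
  refine List.Nodup.map_on ?_ ((List.filter_sublist).nodup (hindex.of_map _))
  intro x hx y hy hname
  simp only [List.mem_filter, decide_eq_true_eq] at hx hy
  exact List.inj_on_of_nodup_map hindex hx.1 hy.1
    (le_antisymm (hy.2 x hx.1 hname) (hx.2 y hy.1 hname.symm))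

theorem cookieMerge_subset {oldcookies : List Cookie} (newcookies : List Cookie)
    (hold : (oldcookies.map Cookie.name).Nodup) :
    CookieMerge oldcookies newcookies ⊆
      {c | (c ∈ oldcookies ∧ ∀ b ∈ keepLast (newcookies.filter fun c => !c.httpOnly),
              b.name = c.name → c.httpOnly) ∨
        (c ∈ keepLast (newcookies.filter fun c => !c.httpOnly) ∧
          ∀ a ∈ oldcookies, a.name = c.name → ¬a.httpOnly)} := by
  rintro c (⟨hmem, hfresh⟩ | ⟨hmem, hfresh⟩ | ⟨cold, hcold, cnew, hcnew, hname, hwin⟩)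
  · exact .inl ⟨hmem, fun b hb hbc => absurd hbc (hfresh b hb)⟩
  · exact .inr ⟨hmem, fun a ha hac => absurd hac (hfresh a ha)⟩
  · rcases hwin with ⟨hfalse, rfl⟩ | ⟨htrue, rfl⟩
    · refine .inr ⟨hcnew, fun a ha hac => ?_⟩
      rw [List.inj_on_of_nodup_map hold ha hcold (hac.trans hname.symm), hfalse]
      decide
    · exact .inl ⟨hcold, fun _ _ _ => htrue⟩

/-- The result of `CookieMerge` has pairwise distinct cookie names. -/
theorem stmt9 (oldcookies newcookies : List Cookie)
    (hold : (oldcookies.map Cookie.name).Nodup) :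
    ∀ c₁ ∈ CookieMerge oldcookies newcookies, ∀ c₂ ∈ CookieMerge oldcookies newcookies,
      c₁ ≠ c₂ → c₁.name ≠ c₂.name := by
  have hinj := (injOn_of_mem_or_mem hold (keepLast_map_name_nodup _)).mono
    (cookieMerge_subset newcookies hold)
  exact fun c₁ h₁ c₂ h₂ hne hname => hne (hinj h₁ h₂ hname)
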